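/- Let G be a Lie group acting transitively on a compact Riemannian manifold (M, ⟨,⟩) with G-invariant metric and G-invariant probability measure ν. Let v_1,...,v_r be an orthonormal basis of a Lie subalgebra 𝔥 of 𝔤 with induced fundamental vector fields V_i* satisfying [V_i*, V_j*] = Σ_l c_{ij}^l V_l*. Then the leafwise Laplacian Δ_E f = Σ_i (V_i* V_i* f - (∇^E_{V_i*} V_i*) f) satisfies ∫_M Δ_E f dν = 0 for all smooth f, i.e. ν is a harmonic measure for the induced foliation. -/

import Mathlib

/-!
For an invariant measure, the integral of the derivative of a function along a measure-preserving
flow vanishes: by the fundamental theorem of calculus and Fubini, `∫ V g dν` equals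
`∫ (g ∘ φ₁ - g ∘ φ₀) dν = 0`. Applied to `g = Vᵢ f` and `g = f`, this kills every term of `Δ_E f`.
-/

open MeasureTheory Manifold Function

section Flow

variable {X : Type*} [TopologicalSpace X] [MeasurableSpace X] [OpensMeasurableSpace X]
  {ν : Measure X}

theorem MeasureTheory.MeasurePreserving.integral_comp_of_continuous {φ : X → X}
    (hφ : MeasurePreserving φ ν ν) {g : X → ℝ} (hg : Continuous g) :
    ∫ x, g (φ x) ∂ν = ∫ x, g x ∂ν := by
  conv_rhs => rw [← hφ.map_eq]
  exact (integral_map hφ.aemeasurable hg.aestronglyMeasurable).symm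

variable [CompactSpace X] [IsFiniteMeasure ν]

theorem integral_eq_zero_of_hasDerivAt_flow {φ : ℝ → X → X} (hφ : Continuous (uncurry φ))
    (hν : ∀ t, MeasurePreserving (φ t) ν ν) {g D : X → ℝ} (hg : Continuous g)
    (hD : Continuous D) (hderiv : ∀ t x, HasDerivAt (fun s => g (φ s x)) (D (φ t x)) t) :
    ∫ x, D x ∂ν = 0 := by
  have hint : ∀ {h : X → ℝ}, Continuous h → Integrable h ν := fun {h} hh =>
    hh.integrable_of_hasCompactSupport (.of_compactSpace h)
  have hφt : ∀ t, Continuous (φ t) := fun t => hφ.comp (continuous_const.prodMk continuous_id)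
  have hφx : ∀ x, Continuous fun t => φ t x := fun x =>
    hφ.comp (continuous_id.prodMk continuous_const)
  have hDφ : Continuous (uncurry fun t x => D (φ t x)) := hD.comp hφ
  obtain ⟨C, hC⟩ := isCompact_univ.exists_bound_of_continuousOn hD.continuousOn
  have : IsFiniteMeasure (volume.restrict (Set.uIoc (0 : ℝ) 1)) :=
    isFiniteMeasure_restrict.2 measure_Ioc_lt_top.ne
  have hswap_int : Integrable (uncurry fun t x => D (φ t x))
      ((volume.restrict (Set.uIoc 0 1)).prod ν) :=
    .of_bound hDφ.aestronglyMeasurable C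
      (Filter.Eventually.of_forall fun p => hC _ (Set.mem_univ _))
  calc ∫ x, D x ∂ν = ∫ t in (0 : ℝ)..1, (∫ x, D (φ t x) ∂ν) := by
        simp only [(hν _).integral_comp_of_continuous hD, intervalIntegral.integral_const,
          sub_zero, one_smul]
    _ = ∫ x, (∫ t in (0 : ℝ)..1, D (φ t x)) ∂ν := intervalIntegral_integral_swap hswap_int
    _ = ∫ x, (g (φ 1 x) - g (φ 0 x)) ∂ν := by
        refine integral_congr_ae (Filter.Eventually.of_forall fun x => ?_)
        exact intervalIntegral.integral_eq_sub_of_hasDerivAt (fun t _ => hderiv t x)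
          ((hD.comp (hφx x)).intervalIntegrable 0 1)
    _ = 0 := by
        rw [integral_sub (f := fun x => g (φ 1 x)) (g := fun x => g (φ 0 x))
          (hint (hg.comp (hφt 1))) (hint (hg.comp (hφt 0))),
          (hν 1).integral_comp_of_continuous hg, (hν 0).integral_comp_of_continuous hg, sub_self]

end Flow

theorem hasDerivAt_comp_smul_of_map_add {G X : Type*} [Monoid G] [MulAction G X] {γ : ℝ → G}
    (hγ : ∀ s t, γ (s + t) = γ s * γ t) {g : X → ℝ} {x : X} {t : ℝ}
    (hd : DifferentiableAt ℝ (fun s => g (γ s • x)) t) :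
    HasDerivAt (fun s => g (γ s • x)) (deriv (fun s => g (γ s • γ t • x)) 0) t := by
  have hshift : (fun s => g (γ s • γ t • x)) = fun s => g (γ (s + t) • x) := by
    funext s
    rw [hγ, mul_smul]
  rw [hshift, deriv_comp_add_const (fun s => g (γ s • x)), zero_add]
  exact hd.hasDerivAt

theorem ContMDiff.differentiable_comp_flow {E H M : Type*} [NormedAddCommGroup E]
    [NormedSpace ℝ E] [TopologicalSpace H] {I : ModelWithCorners ℝ E H} [TopologicalSpace M]
    [ChartedSpace H M] {n : WithTop ℕ∞} (hn : n ≠ 0) {φ : ℝ → M → M}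
    (hφ : ContMDiff (𝓘(ℝ, ℝ).prod I) I n (uncurry φ)) {g : M → ℝ}
    (hg : ContMDiff I 𝓘(ℝ, ℝ) n g) (x : M) : Differentiable ℝ (fun s => g (φ s x)) :=
  (hg.comp (hφ.comp (contMDiff_id.prodMk contMDiff_const))).contDiff.differentiable hn

theorem stmt14_general
    {E : Type*} [NormedAddCommGroup E] [NormedSpace ℝ E]
    {H : Type*} [TopologicalSpace H] (I : ModelWithCorners ℝ E H)
    (M : Type*) [TopologicalSpace M] [ChartedSpace H M]
    [CompactSpace M] [MeasurableSpace M] [BorelSpace M]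
    (G : Type*) [Group G] [MulAction G M]
    (ν : Measure M) [IsProbabilityMeasure ν]
    -- ν is G-invariant
    (hν : ∀ g : G, MeasurePreserving (fun x : M => g • x) ν ν)
    (r : ℕ)
    -- one-parameter subgroups of the orthonormal basis v₁, ..., v_r of 𝔥
    (γ : Fin r → ℝ → G) (hγ : ∀ i (s t : ℝ), γ i (s + t) = γ i s * γ i t)
    (hact : ∀ i, ContMDiff (𝓘(ℝ, ℝ).prod I) I (⊤ : ℕ∞) (fun p : ℝ × M => γ i p.1 • p.2))
    -- the fundamental vector fields Vᵢ*, acting on functions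
    (V : Fin r → (M → ℝ) → (M → ℝ))
    (hV : ∀ i (f : M → ℝ) (x : M), V i f x = deriv (fun t : ℝ => f (γ i t • x)) 0)
    -- the derivative of a smooth function along a fundamental field is smooth
    (hVsmooth : ∀ i (f : M → ℝ),
      ContMDiff I 𝓘(ℝ, ℝ) (⊤ : ℕ∞) f → ContMDiff I 𝓘(ℝ, ℝ) (⊤ : ℕ∞) (V i f))
    -- structure constants of 𝔥: [vᵢ, vⱼ] = ∑ k, c i j k • v_k, so that
    -- ∇^E_{Vᵢ*} Vᵢ* = -∑ k, c i k i • V_k*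
    (c : Fin r → Fin r → Fin r → ℝ)
    (f : M → ℝ) (hf : ContMDiff I 𝓘(ℝ, ℝ) (⊤ : ℕ∞) f) :
    ∫ x, (∑ i, (V i (V i f) x + ∑ k, c i k i * V k f x)) ∂ν = 0 := by
  have hint : ∀ i g, ContMDiff I 𝓘(ℝ, ℝ) (⊤ : ℕ∞) g → Integrable (V i g) ν := fun i g hg =>
    (hVsmooth i g hg).continuous.integrable_of_hasCompactSupport (.of_compactSpace _)
  have hVint : ∀ i g, ContMDiff I 𝓘(ℝ, ℝ) (⊤ : ℕ∞) g → ∫ x, V i g x ∂ν = 0 := by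
    intro i g hg
    refine integral_eq_zero_of_hasDerivAt_flow (φ := fun t x => γ i t • x) (hact i).continuous
      (fun t => hν (γ i t)) hg.continuous (hVsmooth i g hg).continuous fun t x => ?_
    rw [hV]
    exact hasDerivAt_comp_smul_of_map_add (hγ i)
      ((hact i).differentiable_comp_flow (by simp) hg x t)
  have hterm_int : ∀ i, Integrable (fun x => ∑ k, c i k i * V k f x) ν := fun i =>
    integrable_finsetSum _ fun k _ => (hint k f hf).const_mul _
  have hsummand_int : ∀ i, Integrable (fun x => V i (V i f) x + ∑ k, c i k i * V k f x) ν :=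
    fun i => (hint i _ (hVsmooth i f hf)).add (hterm_int i)
  rw [integral_finsetSum _ fun i _ => hsummand_int i]
  refine Finset.sum_eq_zero fun i _ => ?_
  rw [integral_add (hint i _ (hVsmooth i f hf)) (hterm_int i), hVint i _ (hVsmooth i f hf),
    integral_finsetSum _ fun k _ => (hint k f hf).const_mul _]
  simp [integral_const_mul, hVint _ f hf]

/-- Let a Lie group `G` act transitively on a compact manifold `M ≅ G/K`
with a `G`-invariant probability measure `ν`, and let `v 1, ..., v r` be an orthonormal
basis of a Lie subalgebra `𝔥 ⊆ 𝔤` with one-parameter subgroups `γ i (t) = exp (t vᵢ)`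
and fundamental vector fields `Vᵢ*` (`(Vᵢ* f)(x) = d/dt|₀ f (γ i t • x)`), with
structure constants `c` and `∇^E_{Vᵢ*} Vᵢ* = -∑ k, c i k i • V_k*`. Then the leafwise
Laplacian `Δ_E f = ∑ i (Vᵢ* Vᵢ* f - (∇^E_{Vᵢ*} Vᵢ*) f)` satisfies `∫ Δ_E f dν = 0`
for every smooth `f`, i.e. `ν` is a harmonic measure for the induced foliation. -/
theorem stmt14
    {E : Type*} [NormedAddCommGroup E] [NormedSpace ℝ E]
    {H : Type*} [TopologicalSpace H] (I : ModelWithCorners ℝ E H)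
    (M : Type*) [TopologicalSpace M] [ChartedSpace H M] [IsManifold I ((⊤ : ℕ∞) : WithTop ℕ∞) M]
    [CompactSpace M] [MeasurableSpace M] [BorelSpace M]
    (G : Type*) [Group G] [MulAction G M]
    (htrans : ∀ x y : M, ∃ g : G, g • x = y)
    (ν : Measure M) [IsProbabilityMeasure ν]
    -- ν is G-invariant
    (hν : ∀ g : G, MeasurePreserving (fun x : M => g • x) ν ν)
    (r : ℕ)
    -- one-parameter subgroups of the orthonormal basis v₁, ..., v_r of 𝔥
    (γ : Fin r → ℝ → G) (hγ : ∀ i (s t : ℝ), γ i (s + t) = γ i s * γ i t)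
    (hact : ∀ i, ContMDiff (𝓘(ℝ, ℝ).prod I) I (⊤ : ℕ∞) (fun p : ℝ × M => γ i p.1 • p.2))
    -- the fundamental vector fields Vᵢ*, acting on functions
    (V : Fin r → (M → ℝ) → (M → ℝ))
    (hV : ∀ i (f : M → ℝ) (x : M), V i f x = deriv (fun t : ℝ => f (γ i t • x)) 0)
    -- the derivative of a smooth function along a fundamental field is smooth
    (hVsmooth : ∀ i (f : M → ℝ),
      ContMDiff I 𝓘(ℝ, ℝ) (⊤ : ℕ∞) f → ContMDiff I 𝓘(ℝ, ℝ) (⊤ : ℕ∞) (V i f))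
    -- structure constants of 𝔥: [vᵢ, vⱼ] = ∑ k, c i j k • v_k, so that
    -- ∇^E_{Vᵢ*} Vᵢ* = -∑ k, c i k i • V_k*
    (c : Fin r → Fin r → Fin r → ℝ)
    (f : M → ℝ) (hf : ContMDiff I 𝓘(ℝ, ℝ) (⊤ : ℕ∞) f) :
    ∫ x, (∑ i, (V i (V i f) x + ∑ k, c i k i * V k f x)) ∂ν = 0 :=
  stmt14_general I M G ν hν r γ hγ hact V hV hVsmooth c f hf
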